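/- arXiv:2605.01341 — 7 statements merged into one kernel-verified Lean document; each statement's English description precedes it below -/
import Mathlib

section
/- If there exists any ABox H (over the given signature) such that ⟨T, A ∪ H⟩ ⊨_AR α, then {α} is conflict-confining for ⟨T, A⟩, i.e., adding α introduces no new conflicts. Equivalently: if adding α to some repair R of ⟨T, A⟩ yields inconsistency, then no ABox H is an AR-hypothesis for α. -/
variable {α : Type*}

/-- `R` is a repair of the ABox `A`: a subset-maximal `T`-consistent subset of `A`. -/
def IsRepair (Inc : Set α → Prop) (A R : Set α) : Prop :=
  R ⊆ A ∧ ¬ Inc R ∧ ∀ R' : Set α, R' ⊆ A → ¬ Inc R' → R ⊆ R' → R' = R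

/-- The conflicts of `A`: subset-minimal `T`-inconsistent subsets of `A`. -/
def Conf (Inc : Set α → Prop) (A : Set α) : Set (Set α) :=
  {C | C ⊆ A ∧ Inc C ∧ ∀ C' : Set α, C' ⊂ C → ¬ Inc C'}

/-- `H` is conflict-confining for `⟨T, A⟩`. -/
def ConflictConfining (Inc : Set α → Prop) (A H : Set α) : Prop :=
  Conf Inc (A ∪ H) = Conf Inc A

/-- AR entailment: every repair entails `a`. -/
def EntAR (Inc : Set α → Prop) (Ent : Set α → α → Prop) (A : Set α) (a : α) : Prop :=
  ∀ R : Set α, IsRepair Inc A R → Ent R a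

/-- Brave entailment: some repair entails `a`. -/
def EntBrave (Inc : Set α → Prop) (Ent : Set α → α → Prop) (A : Set α) (a : α) : Prop :=
  ∃ R : Set α, IsRepair Inc A R ∧ Ent R a

theorem stmt1
    (Inc : Set α → Prop) (Ent : Set α → α → Prop)
    (hIncMono : ∀ S S' : Set α, S ⊆ S' → Inc S → Inc S')
    (hEntMono : ∀ (S S' : Set α) (b : α), S ⊆ S' → Ent S b → Ent S' b)
    (hEntMem : ∀ (S : Set α) (b : α), b ∈ S → Ent S b)
    (hCoh : ∀ (R : Set α) (b : α), ¬ Inc R → Ent R b → ¬ Inc (R ∪ {b}))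
    (hExt : ∀ B S : Set α, S ⊆ B → ¬ Inc S → ∃ R : Set α, IsRepair Inc B R ∧ S ⊆ R)
    (A : Set α) (a : α)
    (h : ∃ H : Set α, EntAR Inc Ent (A ∪ H) a) :
    ConflictConfining Inc A {a} := by
  obtain ⟨H, hH⟩ := h
  ext C
  constructor
  · rintro ⟨hCsub, hCinc, hCmin⟩
    refine ⟨?_, hCinc, hCmin⟩
    -- show a ∉ C
    by_cases ha : a ∈ C
    · exfalso
      have hlt : C \ {a} ⊂ C := Set.sdiff_singleton_ssubset.mpr ha
      have hcons : ¬ Inc (C \ {a}) := hCmin _ hlt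
      have hsub : C \ {a} ⊆ A ∪ H := by
        intro x hx
        rcases hCsub hx.1 with h1 | h1
        · exact Or.inl h1
        · exact absurd h1 hx.2
      obtain ⟨R, hR, hCR⟩ := hExt (A ∪ H) (C \ {a}) hsub hcons
      have hEnt := hH R hR
      have hnot := hCoh R a hR.2.1 hEnt
      apply hnot
      apply hIncMono C _ _ hCinc
      intro x hx
      by_cases hxa : x = a
      · exact Or.inr hxa
      · exact Or.inl (hCR ⟨hx, hxa⟩)
    · intro x hx
      rcases hCsub hx with h1 | h1
      · exact h1
      · exact absurd (by rwa [Set.mem_singleton_iff.mp h1] at hx) ha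
  · rintro ⟨hCsub, hCinc, hCmin⟩
    exact ⟨hCsub.trans Set.subset_union_left, hCinc, hCmin⟩
end

section
/- For an observation α, there exists a Brave-hypothesis H for ⟨K, α⟩ (i.e., some ABox H with ⟨T, A ∪ H⟩ ⊨_Brave α) if and only if {α} itself is a Brave-hypothesis, which holds if and only if {α} is T-consistent. -/
variable {α : Type*}

theorem stmt2
    (Inc : Set α → Prop) (Ent : Set α → α → Prop)
    (hIncMono : ∀ S S' : Set α, S ⊆ S' → Inc S → Inc S')
    (hEntMono : ∀ (S S' : Set α) (b : α), S ⊆ S' → Ent S b → Ent S' b)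
    (hEntMem : ∀ (S : Set α) (b : α), b ∈ S → Ent S b)
    (hCoh : ∀ (R : Set α) (b : α), ¬ Inc R → Ent R b → ¬ Inc (R ∪ {b}))
    (hExt : ∀ B S : Set α, S ⊆ B → ¬ Inc S → ∃ R : Set α, IsRepair Inc B R ∧ S ⊆ R)
    (A : Set α) (a : α)
    (hBot : Inc {a} → ∀ R : Set α, ¬ Inc R → ¬ Ent R a) :
    ((∃ H : Set α, EntBrave Inc Ent (A ∪ H) a) ↔ EntBrave Inc Ent (A ∪ {a}) a) ∧
      (EntBrave Inc Ent (A ∪ {a}) a ↔ ¬ Inc {a}) := by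
  have key : ¬ Inc {a} → EntBrave Inc Ent (A ∪ {a}) a := by
    intro hna
    obtain ⟨R, hR, haR⟩ := hExt (A ∪ {a}) {a} (Set.subset_union_right) hna
    exact ⟨R, hR, hEntMem R a (haR rfl)⟩
  have key2 : ∀ B, EntBrave Inc Ent B a → ¬ Inc {a} := by
    rintro B ⟨R, hR, hE⟩ hinc
    exact hBot hinc R hR.2.1 hE
  constructor
  · constructor
    · rintro ⟨H, h⟩; exact key (key2 _ h)
    · intro h; exact ⟨{a}, h⟩
  · exact ⟨key2 _, key⟩
end

section
/- In DL-Lite (where minimal T-supports of concept assertions have size 1): if H is a Brave-hypothesis for ⟨K, α⟩ (with K ⊭_Brave α), then there exists a single assertion β ∈ H such that {β} is a Brave-hypothesis for ⟨K, α⟩; moreover Conf(⟨T, A ∪ {β}⟩) ⊆ Conf(⟨T, A ∪ H⟩), and every conflict {α, γ} of ⟨T, A ∪ {α}⟩ gives rise to a conflict {β, γ} of ⟨T, A ∪ {β}⟩. -/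
variable {α : Type*}

theorem stmt4
    (Inc : Set α → Prop) (Ent : Set α → α → Prop)
    (hIncMono : ∀ S S' : Set α, S ⊆ S' → Inc S → Inc S')
    (hEntMono : ∀ (S S' : Set α) (b : α), S ⊆ S' → Ent S b → Ent S' b)
    (hSingSupp : ∀ (R : Set α) (b : α), ¬ Inc R → Ent R b → ∃ β ∈ R, Ent {β} b)
    (hConfSmall : ∀ B C : Set α, C ∈ Conf Inc B → C.ncard ≤ 2)
    (hTrans : ∀ b β γ : α, Ent {β} b → Inc {b, γ} → Inc {β, γ})
    (hExt : ∀ B S : Set α, S ⊆ B → ¬ Inc S → ∃ R : Set α, IsRepair Inc B R ∧ S ⊆ R)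
    (A H : Set α) (a : α)
    (hNotBrave : ¬ EntBrave Inc Ent A a)
    (hHyp : EntBrave Inc Ent (A ∪ H) a) :
    ∃ β ∈ H, EntBrave Inc Ent (A ∪ {β}) a ∧
      Conf Inc (A ∪ {β}) ⊆ Conf Inc (A ∪ H) ∧
      (∀ γ : α, ({a, γ} : Set α) ∈ Conf Inc (A ∪ {a}) →
        ({β, γ} : Set α) ∈ Conf Inc (A ∪ {β})) := by
  obtain ⟨R, ⟨hRsub, hRcons, hRmax⟩, hEntR⟩ := hHyp
  obtain ⟨β, hβR, hEntβ⟩ := hSingSupp R a hRcons hEntR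
  have hβcons : ¬ Inc {β} := fun h =>
    hRcons (hIncMono _ _ (Set.singleton_subset_iff.2 hβR) h)
  have hβH : β ∈ H := by
    rcases hRsub hβR with h | h
    · exfalso
      obtain ⟨R', hR', hsub⟩ := hExt A {β} (Set.singleton_subset_iff.2 h) hβcons
      exact hNotBrave ⟨R', hR', hEntMono _ _ _ hsub hEntβ⟩
    · exact h
  refine ⟨β, hβH, ?_, ?_, ?_⟩
  · obtain ⟨R', hR', hsub⟩ := hExt (A ∪ {β}) {β} Set.subset_union_right hβcons
    exact ⟨R', hR', hEntMono _ _ _ hsub hEntβ⟩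
  · rintro C ⟨hCsub, hCinc, hCmin⟩
    exact ⟨hCsub.trans (Set.union_subset_union_right A
      (Set.singleton_subset_iff.2 hβH)), hCinc, hCmin⟩
  · rintro γ ⟨hsub, hinc, hmin⟩
    have haγ : a ≠ γ := by
      rintro rfl
      have hia : Inc {a} := by simpa using hinc
      exact hβcons (by simpa using hTrans a β β hEntβ (hIncMono _ _ (by simp) hia))
    have hγA : γ ∈ A := by
      rcases hsub (show γ ∈ ({a, γ} : Set α) by simp) with h | h
      · exact h
      · simp at h; exact absurd h.symm haγ
    have hγcons : ¬ Inc {γ} := by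
      refine hmin {γ} ⟨by simp, fun hc => haγ ?_⟩
      have := hc (Set.mem_insert a _)
      simpa using this
    have hβγ : Inc {β, γ} := hTrans a β γ hEntβ hinc
    refine ⟨?_, hβγ, ?_⟩
    · intro x hx
      rcases hx with rfl | hx
      · exact Or.inr rfl
      · simp at hx; subst hx; exact Or.inl hγA
    · intro C' hC'
      have hcase : C' ⊆ {β} ∨ C' ⊆ {γ} := by
        by_cases hb : β ∈ C'
        · by_cases hg : γ ∈ C'
          · exfalso
            apply hC'.2
            intro x hx
            rcases hx with rfl | hx
            · exact hb
            · simp at hx; subst hx; exact hg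
          · left
            intro x hx
            rcases hC'.1 hx with rfl | h
            · rfl
            · simp at h; subst h; exact absurd hx hg
        · right
          intro x hx
          rcases hC'.1 hx with rfl | h
          · exact absurd hx hb
          · exact h
      rcases hcase with h | h
      · exact fun hc => hβcons (hIncMono _ _ h hc)
      · exact fun hc => hγcons (hIncMono _ _ h hc)
end

section
/- In DL-Lite under Brave semantics, every Brave-hypothesis H for ⟨K, α⟩ contains a subset-minimal Brave-hypothesis of cardinality 1; consequently an ABox H is a ⊆-minimal Brave-hypothesis if and only if it is a ≤-minimal (cardinality-minimal) Brave-hypothesis. -/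
variable {α : Type*}

theorem stmt5
    (Inc : Set α → Prop) (Ent : Set α → α → Prop)
    (hIncMono : ∀ S S' : Set α, S ⊆ S' → Inc S → Inc S')
    (hEntMono : ∀ (S S' : Set α) (b : α), S ⊆ S' → Ent S b → Ent S' b)
    (hSingSupp : ∀ (R : Set α) (b : α), ¬ Inc R → Ent R b → ∃ β ∈ R, Ent {β} b)
    (hExt : ∀ B S : Set α, S ⊆ B → ¬ Inc S → ∃ R : Set α, IsRepair Inc B R ∧ S ⊆ R)
    (A : Set α) (a : α)
    (hNotBrave : ¬ EntBrave Inc Ent A a) :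
    (∀ H : Set α, EntBrave Inc Ent (A ∪ H) a →
      ∃ β ∈ H, EntBrave Inc Ent (A ∪ {β}) a ∧
        (∀ H' : Set α, H' ⊂ ({β} : Set α) → ¬ EntBrave Inc Ent (A ∪ H') a)) ∧
    (∀ H : Set α, H.Finite →
      ((EntBrave Inc Ent (A ∪ H) a ∧
          ∀ H' : Set α, H' ⊂ H → ¬ EntBrave Inc Ent (A ∪ H') a) ↔
        (EntBrave Inc Ent (A ∪ H) a ∧
          ∀ H' : Set α, H'.Finite → EntBrave Inc Ent (A ∪ H') a →
            H.ncard ≤ H'.ncard))) := by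
  have key : ∀ H : Set α, EntBrave Inc Ent (A ∪ H) a →
      ∃ β ∈ H, EntBrave Inc Ent (A ∪ {β}) a ∧
        (∀ H' : Set α, H' ⊂ ({β} : Set α) → ¬ EntBrave Inc Ent (A ∪ H') a) := by
    rintro H ⟨R, ⟨hRsub, hRcon, -⟩, hEnt⟩
    obtain ⟨β, hβR, hβEnt⟩ := hSingSupp R a hRcon hEnt
    have hβcon : ¬ Inc {β} := fun h =>
      hRcon (hIncMono _ _ (Set.singleton_subset_iff.mpr hβR) h)
    have hβH : β ∈ H := by
      rcases hRsub hβR with h | h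
      · exfalso
        obtain ⟨R', hR', hsub⟩ := hExt A {β} (Set.singleton_subset_iff.mpr h) hβcon
        exact hNotBrave ⟨R', hR', hEntMono _ _ _ hsub hβEnt⟩
      · exact h
    refine ⟨β, hβH, ?_, ?_⟩
    · obtain ⟨R', hR', hsub⟩ := hExt (A ∪ {β}) {β} Set.subset_union_right hβcon
      exact ⟨R', hR', hEntMono _ _ _ hsub hβEnt⟩
    · intro H' hH' hBr
      have hH'e : H' = ∅ := by
        rcases Set.subset_singleton_iff_eq.mp hH'.subset with h | h
        · exact h
        · exact absurd h hH'.ne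
      rw [hH'e, Set.union_empty] at hBr
      exact hNotBrave hBr
  refine ⟨key, ?_⟩
  intro H hHfin
  constructor
  · rintro ⟨hBr, hmin⟩
    obtain ⟨β, hβH, hβBr, -⟩ := key H hBr
    have hHeq : H = {β} := by
      by_contra hne
      exact hmin {β}
        (Set.ssubset_iff_subset_ne.mpr
          ⟨Set.singleton_subset_iff.mpr hβH, fun h => hne h.symm⟩) hβBr
    refine ⟨hBr, ?_⟩
    intro H' hH'fin hBr'
    obtain ⟨β', hβ'H', -, -⟩ := key H' hBr'
    have h1 : 1 ≤ H'.ncard := (Set.ncard_pos hH'fin).mpr ⟨β', hβ'H'⟩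
    rw [hHeq, Set.ncard_singleton]
    exact h1
  · rintro ⟨hBr, hmin⟩
    refine ⟨hBr, ?_⟩
    intro H' hss hBr'
    have hH'fin : H'.Finite := hHfin.subset hss.subset
    have h1 := hmin H' hH'fin hBr'
    have h2 : H'.ncard < H.ncard := Set.ncard_lt_ncard hss hHfin
    omega
end

section
/- Characterization of AR-hypotheses in DL-Lite: given a set B of candidate assertions, there exists an AR-hypothesis H ⊆ B for ⟨K, α⟩ if and only if for every repair R of K = ⟨T,A⟩ there exists an assertion β ∈ A ∪ B with ⟨T,{β}⟩ ⊨ α and ¬Inc(R ∪ {β}). Moreover, in that case, choosing for each repair Rᵢ such a βᵢ, the set {β₁,…,βₘ} \ A is an AR-hypothesis. -/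
variable {α : Type*}

theorem stmt6
    (Inc : Set α → Prop) (Ent : Set α → α → Prop)
    (hIncMono : ∀ S S' : Set α, S ⊆ S' → Inc S → Inc S')
    (hEntMono : ∀ (S S' : Set α) (b : α), S ⊆ S' → Ent S b → Ent S' b)
    (hSingSupp : ∀ (R : Set α) (b : α), ¬ Inc R → Ent R b → ∃ β ∈ R, Ent {β} b)
    (hExt : ∀ B S : Set α, S ⊆ B → ¬ Inc S → ∃ R : Set α, IsRepair Inc B R ∧ S ⊆ R)
    (A B : Set α) (a : α)
    (hFinRep : {R : Set α | IsRepair Inc A R}.Finite) :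
    ((∃ H : Set α, H ⊆ B ∧ EntAR Inc Ent (A ∪ H) a) ↔
      (∀ R : Set α, IsRepair Inc A R →
        ∃ β ∈ A ∪ B, Ent {β} a ∧ ¬ Inc (R ∪ {β}))) ∧
    (∀ f : Set α → α,
      (∀ R : Set α, IsRepair Inc A R →
        f R ∈ A ∪ B ∧ Ent {f R} a ∧ ¬ Inc (R ∪ {f R})) →
      EntAR Inc Ent
        (A ∪ ({β : α | ∃ R : Set α, IsRepair Inc A R ∧ f R = β} \ A)) a) := by
  classical
  have key : ∀ f : Set α → α,
      (∀ R : Set α, IsRepair Inc A R →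
        f R ∈ A ∪ B ∧ Ent {f R} a ∧ ¬ Inc (R ∪ {f R})) →
      EntAR Inc Ent
        (A ∪ ({β : α | ∃ R : Set α, IsRepair Inc A R ∧ f R = β} \ A)) a := by
    intro f hf R' hR'
    set H : Set α := {β : α | ∃ R : Set α, IsRepair Inc A R ∧ f R = β} \ A with hH
    by_cases hc : ∃ β ∈ R', β ∈ H
    · obtain ⟨β, hβR', hβH⟩ := hc
      obtain ⟨R₀, hR₀, hfR₀⟩ := hβH.1
      exact hEntMono {β} R' a (by simpa using hβR') (hfR₀ ▸ (hf R₀ hR₀).2.1)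
    · push_neg at hc
      have hR'A : R' ⊆ A := by
        intro x hx
        rcases hR'.1 hx with h | h
        · exact h
        · exact absurd h (hc x hx)
      have hRepA : IsRepair Inc A R' :=
        ⟨hR'A, hR'.2.1, fun R'' hR''A hR''c hsub =>
          hR'.2.2 R'' (hR''A.trans Set.subset_union_left) hR''c hsub⟩
      obtain ⟨hmem, hent, hcons⟩ := hf R' hRepA
      have hβin : f R' ∈ A ∪ H := by
        by_cases hA : f R' ∈ A
        · exact Or.inl hA
        · exact Or.inr ⟨⟨R', hRepA, rfl⟩, hA⟩
      have heq : R' ∪ {f R'} = R' := by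
        refine hR'.2.2 _ ?_ hcons Set.subset_union_left
        intro x hx
        rcases hx with hx | hx
        · exact hR'.1 hx
        · simp only [Set.mem_singleton_iff] at hx; subst hx; exact hβin
      exact heq ▸ hEntMono {f R'} (R' ∪ {f R'}) a Set.subset_union_right hent
  constructor
  · constructor
    · rintro ⟨H, hHB, hAR⟩ R hR
      have hRs : R ⊆ A ∪ H := hR.1.trans Set.subset_union_left
      obtain ⟨R', hR', hRR'⟩ := hExt (A ∪ H) R hRs hR.2.1
      obtain ⟨β, hβR', hβent⟩ := hSingSupp R' a hR'.2.1 (hAR R' hR')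
      refine ⟨β, ?_, hβent, ?_⟩
      · rcases hR'.1 hβR' with h | h
        · exact Or.inl h
        · exact Or.inr (hHB h)
      · intro hInc
        refine hR'.2.1 (hIncMono _ _ ?_ hInc)
        intro x hx
        rcases hx with hx | hx
        · exact hRR' hx
        · simp only [Set.mem_singleton_iff] at hx; subst hx; exact hβR'
    · intro hRHS
      by_cases hrep : ∃ R : Set α, IsRepair Inc A R
      · obtain ⟨R₀, hR₀⟩ := hrep
        obtain ⟨β₀, -, -, -⟩ := hRHS R₀ hR₀
        have hne : Nonempty α := ⟨β₀⟩
        let f : Set α → α := fun R =>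
          if h : ∃ β, β ∈ A ∪ B ∧ Ent {β} a ∧ ¬ Inc (R ∪ {β}) then h.choose
          else Classical.arbitrary α
        have hf : ∀ R : Set α, IsRepair Inc A R →
            f R ∈ A ∪ B ∧ Ent {f R} a ∧ ¬ Inc (R ∪ {f R}) := by
          intro R hR
          obtain ⟨β, hβ1, hβ2, hβ3⟩ := hRHS R hR
          have h : ∃ β, β ∈ A ∪ B ∧ Ent {β} a ∧ ¬ Inc (R ∪ {β}) := ⟨β, hβ1, hβ2, hβ3⟩
          simp only [f, dif_pos h]
          exact h.choose_spec
        refine ⟨{β : α | ∃ R : Set α, IsRepair Inc A R ∧ f R = β} \ A, ?_, key f hf⟩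
        rintro β ⟨⟨R, hR, rfl⟩, hβA⟩
        rcases (hf R hR).1 with h | h
        · exact absurd h hβA
        · exact h
      · refine ⟨∅, Set.empty_subset B, ?_⟩
        intro R hR
        rw [Set.union_empty] at hR
        exact absurd ⟨R, hR⟩ hrep
  · exact key
end

section
/- In the QBF encoding for non-trivial AR-hypotheses: let φ = {C₁,…,Cₘ} be a DNF over variables X = {x₁,…,xₙ}, with sets of atoms {T_{x}(a), F_{x}(a) : x ∈ X} ∪ {C_j(a)} ∪ {A(a)}. Inconsistency: a set is inconsistent iff it contains both T_x(a) and F_x(a) for some x, or contains C_j(a) together with T_x(a) where ¬x ∈ C_j, or C_j(a) together with F_x(a) where x ∈ C_j. Entailment of A(a): a consistent set entails A(a) iff it contains some C_j(a) or A(a). With ABox A = {T_x(a), F_x(a) : x ∈ X}, the formula ∀X φ is true if and only if the set H = {C_j(a) : 1 ≤ j ≤ m} is an AR-hypothesis for A(a), i.e., every repair of A ∪ H entails A(a). -/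
variable {α : Type*}

/-- Atoms of the QBF encoding: `Sum.inl (x, true)` is `T_x(a)`,
`Sum.inl (x, false)` is `F_x(a)`, `Sum.inr (Sum.inl j)` is `C_j(a)`,
and `Sum.inr (Sum.inr ())` is `A(a)`. -/
abbrev QAtom (V J : Type*) := (V × Bool) ⊕ (J ⊕ Unit)

/-- Inconsistency for the QBF encoding, where `φ j` is the set of literals of
the conjunction term `C_j`. -/
def QInc {V J : Type*} (φ : J → Set (V × Bool)) (S : Set (QAtom V J)) : Prop :=
  (∃ x : V, Sum.inl (x, true) ∈ S ∧ Sum.inl (x, false) ∈ S) ∨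
  (∃ j : J, ∃ x : V, Sum.inr (Sum.inl j) ∈ S ∧
    (((x, false) ∈ φ j ∧ Sum.inl (x, true) ∈ S) ∨
     ((x, true) ∈ φ j ∧ Sum.inl (x, false) ∈ S)))

/-- A (consistent) set entails `A(a)` iff it contains `A(a)` or some `C_j(a)`. -/
def QEntA {V J : Type*} (S : Set (QAtom V J)) : Prop :=
  Sum.inr (Sum.inr ()) ∈ S ∨ ∃ j : J, Sum.inr (Sum.inl j) ∈ S

theorem stmt10 {V J : Type*} (φ : J → Set (V × Bool)) :
    (∀ s : V → Bool, ∃ j : J, ∀ ℓ ∈ φ j, s ℓ.1 = ℓ.2) ↔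
      (∀ R : Set (QAtom V J),
        IsRepair (QInc φ)
          (({Sum.inl p | p : V × Bool} : Set (QAtom V J)) ∪
            {Sum.inr (Sum.inl j) | j : J}) R →
        QEntA R) := by
  classical
  set A : Set (QAtom V J) :=
    ({Sum.inl p | p : V × Bool} : Set (QAtom V J)) ∪ {Sum.inr (Sum.inl j) | j : J} with hA
  constructor
  · intro h R hR
    obtain ⟨hsub, hcon, hmax⟩ := hR
    by_cases hj : ∃ j : J, Sum.inr (Sum.inl j) ∈ R
    · exact Or.inr hj
    push_neg at hj
    -- every variable gets a value
    have hone : ∀ x : V, (Sum.inl (x, true) ∈ R) ∨ (Sum.inl (x, false) ∈ R) := by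
      intro x
      by_contra hc
      push_neg at hc
      have h1 : insert (Sum.inl (x, true)) R ⊆ A :=
        Set.insert_subset (Or.inl ⟨(x, true), rfl⟩) hsub
      have h2 : ¬ QInc φ (insert (Sum.inl (x, true)) R) := by
        rintro (⟨y, hy1, hy2⟩ | ⟨j, y, hjR, _⟩)
        · rcases hy2 with hy2 | hy2
          · exact absurd hy2 (by simp)
          rcases hy1 with hy1 | hy1
          · obtain ⟨rfl, -⟩ : y = x ∧ (true : Bool) = true := by
              simpa using hy1
            exact hc.2 hy2
          · exact hcon (Or.inl ⟨y, hy1, hy2⟩)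
        · rcases hjR with hjR | hjR
          · exact absurd hjR (by simp)
          · exact hj j hjR
      have := hmax _ h1 h2 (Set.subset_insert _ _)
      exact hc.1 (this ▸ Set.mem_insert _ _)
    set s : V → Bool := fun x => if Sum.inl (x, true) ∈ R then true else false with hs
    have hT : ∀ x : V, s x = true ↔ Sum.inl (x, true) ∈ R := by
      intro x
      by_cases hx : Sum.inl (x, true) ∈ R
      · simp [hs, hx]
      · simp [hs, hx]
    have hF : ∀ x : V, s x = false ↔ Sum.inl (x, false) ∈ R := by
      intro x
      by_cases hx : Sum.inl (x, true) ∈ R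
      · simp only [hs, if_pos hx]
        constructor
        · intro hc; exact Bool.noConfusion hc
        · intro hfm; exact absurd (Or.inl ⟨x, hx, hfm⟩) hcon
      · simp only [hs, if_neg hx]
        constructor
        · intro _; exact (hone x).resolve_left hx
        · intro _; trivial
    obtain ⟨j₀, hj₀⟩ := h s
    exfalso
    have h1 : insert (Sum.inr (Sum.inl j₀)) R ⊆ A :=
      Set.insert_subset (Or.inr ⟨j₀, rfl⟩) hsub
    have h2 : ¬ QInc φ (insert (Sum.inr (Sum.inl j₀)) R) := by
      rintro (⟨y, hy1, hy2⟩ | ⟨j, y, hjR, hlit⟩)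
      · rcases hy1 with hy1 | hy1
        · exact absurd hy1 (by simp)
        rcases hy2 with hy2 | hy2
        · exact absurd hy2 (by simp)
        exact hcon (Or.inl ⟨y, hy1, hy2⟩)
      · have hjj : j = j₀ := by
          rcases hjR with hjR | hjR
          · simpa using hjR
          · exact absurd hjR (hj j)
        subst hjj
        rcases hlit with ⟨hmem, hin⟩ | ⟨hmem, hin⟩
        · have hyT : Sum.inl (y, true) ∈ R := by
            rcases hin with hin | hin
            · exact absurd hin (by simp)
            · exact hin
          have e1 : s y = false := hj₀ (y, false) hmem
          have e2 : s y = true := (hT y).2 hyT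
          rw [e1] at e2; exact Bool.noConfusion e2
        · have hyF : Sum.inl (y, false) ∈ R := by
            rcases hin with hin | hin
            · exact absurd hin (by simp)
            · exact hin
          have e1 : s y = true := hj₀ (y, true) hmem
          have e2 : s y = false := (hF y).2 hyF
          rw [e1] at e2; exact Bool.noConfusion e2
    have := hmax _ h1 h2 (Set.subset_insert _ _)
    exact hj j₀ (this ▸ Set.mem_insert _ _)
  · intro h s
    set R : Set (QAtom V J) :=
      {a | (∃ x : V, a = Sum.inl (x, s x)) ∨
        (∃ j : J, a = Sum.inr (Sum.inl j) ∧ ∀ ℓ ∈ φ j, s ℓ.1 = ℓ.2)} with hRdef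
    have hTR : ∀ x : V, ∀ b : Bool, Sum.inl (x, b) ∈ R ↔ s x = b := by
      intro x b
      constructor
      · rintro (⟨x', hx'⟩ | ⟨j, hj, _⟩)
        · obtain ⟨rfl, hb⟩ : x = x' ∧ b = s x' := by simpa using hx'
          exact hb.symm
        · exact absurd hj (by simp)
      · rintro rfl
        exact Or.inl ⟨x, rfl⟩
    have hCR : ∀ j : J, Sum.inr (Sum.inl j) ∈ R ↔ ∀ ℓ ∈ φ j, s ℓ.1 = ℓ.2 := by
      intro j
      constructor
      · rintro (⟨x, hx⟩ | ⟨j', hj', hsat⟩)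
        · exact absurd hx (by simp)
        · obtain rfl : j = j' := by simpa using hj'
          exact hsat
      · intro hsat
        exact Or.inr ⟨j, rfl, hsat⟩
    have hcon : ¬ QInc φ R := by
      rintro (⟨x, h1, h2⟩ | ⟨j, x, hjm, hlit⟩)
      · have e1 := (hTR x true).1 h1
        have e2 := (hTR x false).1 h2
        rw [e1] at e2; exact Bool.noConfusion e2
      · have hsat := (hCR j).1 hjm
        rcases hlit with ⟨hmem, hin⟩ | ⟨hmem, hin⟩
        · have e1 : s x = false := hsat (x, false) hmem
          have e2 : s x = true := (hTR x true).1 hin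
          rw [e1] at e2; exact Bool.noConfusion e2
        · have e1 : s x = true := hsat (x, true) hmem
          have e2 : s x = false := (hTR x false).1 hin
          rw [e1] at e2; exact Bool.noConfusion e2
    have hrep : IsRepair (QInc φ) A R := by
      refine ⟨?_, hcon, ?_⟩
      · rintro a (⟨x, rfl⟩ | ⟨j, rfl, _⟩)
        · exact Or.inl ⟨(x, s x), rfl⟩
        · exact Or.inr ⟨j, rfl⟩
      · intro R' hR'A hR'con hRR'
        refine Set.Subset.antisymm ?_ hRR'
        intro a ha
        rcases hR'A ha with ⟨⟨x, b⟩, rfl⟩ | ⟨j, rfl⟩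
        · by_cases hb : s x = b
          · exact (hTR x b).2 hb
          · exfalso
            have hR1 : Sum.inl (x, s x) ∈ R' := hRR' ((hTR x (s x)).2 rfl)
            cases b
            · have hsx : s x = true := by
                cases hxx : s x
                · exact absurd hxx hb
                · rfl
              rw [hsx] at hR1
              exact hR'con (Or.inl ⟨x, hR1, ha⟩)
            · have hsx : s x = false := by
                cases hxx : s x
                · rfl
                · exact absurd hxx hb
              rw [hsx] at hR1
              exact hR'con (Or.inl ⟨x, ha, hR1⟩)
        · refine (hCR j).2 ?_
          rintro ⟨x, b⟩ hmem
          by_contra hb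
          have hR1 : Sum.inl (x, s x) ∈ R' := hRR' ((hTR x (s x)).2 rfl)
          cases b
          · have hsx : s x = true := by
              cases hxx : s x
              · exact absurd hxx (by simpa using hb)
              · rfl
            rw [hsx] at hR1
            exact hR'con (Or.inr ⟨j, x, ha, Or.inl ⟨hmem, hR1⟩⟩)
          · have hsx : s x = false := by
              cases hxx : s x
              · rfl
              · exact absurd hxx (by simpa using hb)
            rw [hsx] at hR1
            exact hR'con (Or.inr ⟨j, x, ha, Or.inr ⟨hmem, hR1⟩⟩)
    rcases h R hrep with hAm | ⟨j, hjm⟩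
    · rcases hAm with ⟨x, hx⟩ | ⟨j, hj, _⟩
      · exact absurd hx (by simp)
      · exact absurd hj (by simp)
    · exact ⟨j, (hCR j).1 hjm⟩
end

section
/- In the DNF/AR encoding (Theorem on non-trivial AR-hypotheses, direction ⇐): if there exists a non-trivial AR-hypothesis H for the abduction problem built from an ∀-QBF ∀X φ with φ in DNF, then ∀X φ is true. Specifically, with T encoding C_j ⊑ A, disjointness T_x ⊓ F_x ⊑ ⊥, and C_j conflicting with literal-atoms falsifying the term C_j, and A = {T_x(a), F_x(a) : x ∈ X}: if some ABox H with A(a) ∉ H satisfies that every repair of A ∪ H entails A(a), then every assignment over X satisfies some term of φ. -/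
variable {α : Type*}

/-- Direction (⇐): any non-trivial AR-hypothesis witnesses truth of `∀X φ`. -/
theorem stmt14 {V J : Type*} (φ : J → Set (V × Bool))
    (H : Set (QAtom V J))
    (hNonTriv : Sum.inr (Sum.inr ()) ∉ H)
    (hARHyp : ∀ R : Set (QAtom V J),
      IsRepair (QInc φ)
        (({Sum.inl p | p : V × Bool} : Set (QAtom V J)) ∪ H) R →
      QEntA R) :
    ∀ s : V → Bool, ∃ j : J, ∀ ℓ ∈ φ j, s ℓ.1 = ℓ.2 := by
  intro s
  set A : Set (QAtom V J) := ({Sum.inl p | p : V × Bool} : Set (QAtom V J)) with hA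
  set R : Set (QAtom V J) :=
    {q | (∃ x : V, q = Sum.inl (x, s x)) ∨
      (∃ j : J, q = Sum.inr (Sum.inl j) ∧ Sum.inr (Sum.inl j) ∈ H ∧
        ∀ ℓ ∈ φ j, s ℓ.1 = ℓ.2)} with hR
  have hsub : R ⊆ A ∪ H := by
    rintro q (⟨x, rfl⟩ | ⟨j, rfl, hj, _⟩)
    · exact Or.inl ⟨(x, s x), rfl⟩
    · exact Or.inr hj
  have hcons : ¬ QInc φ R := by
    rintro (⟨x, hT, hF⟩ | ⟨j, x, hj, hlit⟩)
    · rcases hT with ⟨y, hy⟩ | ⟨j, hj, _⟩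
      · rcases hF with ⟨z, hz⟩ | ⟨j, hj, _⟩
        · obtain ⟨rfl, h1⟩ : x = y ∧ true = s y := by
            simpa using hy
          obtain ⟨rfl, h2⟩ : x = z ∧ false = s z := by
            simpa using hz
          rw [← h1] at h2
          exact Bool.noConfusion h2
        · simp at hj
      · simp at hj
    · rcases hj with ⟨y, hy⟩ | ⟨j', hj', hH, hsat⟩
      · simp at hy
      · obtain rfl : j = j' := by simpa using hj'
        rcases hlit with ⟨hmem, hT⟩ | ⟨hmem, hF⟩
        · rcases hT with ⟨y, hy⟩ | ⟨j'', hj'', _⟩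
          · obtain ⟨rfl, h1⟩ : x = y ∧ true = s y := by simpa using hy
            have := hsat (x, false) hmem
            simp [← h1] at this
          · simp at hj''
        · rcases hF with ⟨y, hy⟩ | ⟨j'', hj'', _⟩
          · obtain ⟨rfl, h1⟩ : x = y ∧ false = s y := by simpa using hy
            have := hsat (x, true) hmem
            simp [← h1] at this
          · simp at hj''
  have hmax : ∀ R' : Set (QAtom V J), R' ⊆ A ∪ H → ¬ QInc φ R' → R ⊆ R' → R' = R := by
    intro R' hR'sub hR'cons hRR'
    apply Set.Subset.antisymm _ hRR'
    intro q hq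
    by_contra hqR
    match q with
    | Sum.inl (x, b) =>
      have hb : b ≠ s x := by
        intro h; exact hqR (Or.inl ⟨x, by rw [h]⟩)
      have hsx : Sum.inl (x, s x) ∈ R' := hRR' (Or.inl ⟨x, rfl⟩)
      apply hR'cons
      left
      refine ⟨x, ?_⟩
      cases hb' : s x
      · rw [hb'] at hsx hb
        have : b = true := by cases b <;> simp_all
        rw [this] at hq
        exact ⟨hq, hsx⟩
      · rw [hb'] at hsx hb
        have : b = false := by cases b <;> simp_all
        rw [this] at hq
        exact ⟨hsx, hq⟩
    | Sum.inr (Sum.inr ()) =>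
        rcases hR'sub hq with ⟨p, hp⟩ | hqH
        · simp at hp
        · exact hNonTriv hqH
    | Sum.inr (Sum.inl j) =>
        have hqH : Sum.inr (Sum.inl j) ∈ H := by
          rcases hR'sub hq with ⟨p, hp⟩ | hqH
          · simp at hp
          · exact hqH
        have hns : ¬ ∀ ℓ ∈ φ j, s ℓ.1 = ℓ.2 := by
          intro hsat
          exact hqR (Or.inr ⟨j, rfl, hqH, hsat⟩)
        push_neg at hns
        obtain ⟨⟨x, b⟩, hmem, hne⟩ := hns
        apply hR'cons
        right
        refine ⟨j, x, hq, ?_⟩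
        cases b
        · left
          refine ⟨hmem, ?_⟩
          have hb : s x = true := by simpa using hne
          exact hRR' (Or.inl ⟨x, by rw [hb]⟩)
        · right
          refine ⟨hmem, ?_⟩
          have hb : s x = false := by simpa using hne
          exact hRR' (Or.inl ⟨x, by rw [hb]⟩)
  have hrep : IsRepair (QInc φ) (A ∪ H) R := ⟨hsub, hcons, hmax⟩
  rcases hARHyp R hrep with hAa | ⟨j, hj⟩
  · rcases hAa with ⟨x, hx⟩ | ⟨j, hj, _⟩
    · simp at hx
    · simp at hj
  · rcases hj with ⟨x, hx⟩ | ⟨j', hj', _, hsat⟩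
    · simp at hx
    · obtain rfl : j = j' := by simpa using hj'
      exact ⟨j, hsat⟩
end
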